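/- Let E be a finite-dimensional real normed vector space, B : E → (E →L[ℝ] E) a C^∞ map, and u, c ∈ E such that B(p)(u) = p + c for all p ∈ E, and such that (DB)(p)(v) ∘ (DB)(p)(w) = (DB)(p)(w) ∘ (DB)(p)(v) for all p, v, w ∈ E. Define a multiplication on smooth vector fields by (X∘Y)(p) := (DB)(p)(X(p))(Y(p)). Then ∘ is commutative and associative, the constant vector field with value u is an identity for ∘, and (E, ∘) satisfies the Hertling–Manin F-manifold identity: P_{X∘Y}(Z,W) = X∘P_Y(Z,W) + Y∘P_X(Z,W) for all smooth vector fields X, Y, Z, W, where P_X(Z,W) := [X, Z∘W] − [X,Z]∘W − Z∘[X,W]. -/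

import Mathlib

/-!
Differentiating `B(p)u = p + c` in `p` shows that `u` is a unit of every product `(DB)(p)`,
and a unit turns the commutation of the operators `(DB)(p)(v)` into commutativity and then
associativity of the product. The F-manifold identity at a point `p` only involves the
product `A = (DB)(p)`, the first derivatives of the fields and `S = (D²B)(p)`; besides the
algebra of `A` it needs just two facts about `S`: symmetry in its first two arguments (Schwarz)
and the derivative of the associativity law `A(A v w) x = A v (A w x)`.
-/

open ContDiff

variable {E : Type*} [NormedAddCommGroup E] [NormedSpace ℝ E]

/-- Lie bracket of vector fields on a normed space:
`[X,Y](p) = (DY)(p)(X(p)) - (DX)(p)(Y(p))`. -/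
noncomputable def lieB (X Y : E → E) : E → E :=
  fun p => fderiv ℝ Y p (X p) - fderiv ℝ X p (Y p)

/-- Multiplication on vector fields induced by `B`: `(X∘Y)(p) = (DB)(p)(X(p))(Y(p))`. -/
noncomputable def mulB (B : E → (E →L[ℝ] E)) (X Y : E → E) : E → E :=
  fun p => fderiv ℝ B p (X p) (Y p)

/-- The Hertling–Manin expression `P_X(Z,W)` for the multiplication `mulB`. -/
noncomputable def hmPB (B : E → (E →L[ℝ] E)) (X Z W : E → E) : E → E :=
  fun p => lieB X (mulB B Z W) p - mulB B (lieB X Z) W p - mulB B Z (lieB X W) p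

section Algebra

variable {𝕜 F : Type*} [NontriviallyNormedField 𝕜] [NormedAddCommGroup F] [NormedSpace 𝕜 F]

theorem ContinuousLinearMap.apply_comm_of_comp_comm_of_unit {A : F →L[𝕜] F →L[𝕜] F} {u : F}
    (hcomp : ∀ v w, (A v).comp (A w) = (A w).comp (A v)) (hu : ∀ v, A v u = v) (v w : F) :
    A v w = A w v := by
  simpa [hu] using DFunLike.congr_fun (hcomp v w) u

theorem ContinuousLinearMap.apply_assoc_of_comp_comm {A : F →L[𝕜] F →L[𝕜] F}
    (hcomp : ∀ v w, (A v).comp (A w) = (A w).comp (A v)) (hA : ∀ v w, A v w = A w v)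
    (v w x : F) : A (A v w) x = A v (A w x) := by
  calc A (A v w) x = A x (A v w) := hA _ _
    _ = A v (A x w) := DFunLike.congr_fun (hcomp x v) w
    _ = A v (A w x) := by rw [hA x w]

variable {A : F →L[𝕜] F →L[𝕜] F} {S : F →L[𝕜] F →L[𝕜] F →L[𝕜] F}

theorem hertlingManin_secondOrder (hA : ∀ v w, A v w = A w v)
    (hS : ∀ h v w, S h v w = S v h w)
    (hSA : ∀ h v w x, S h (A v w) x + A (S h v w) x = S h v (A w x) + A v (S h w x))
    (x y z w : F) :
    S (A x y) z w + A (S z x y) w + A z (S w x y) - S (A z w) x y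
      = A x (S y z w) + A y (S x z w) := by
  have h₁ : S (A x y) z w + A (S z x y) w = S x z (A w y) + A x (S y z w) := by
    calc S (A x y) z w + A (S z x y) w = S z (A x y) w + A (S z x y) w := by rw [hS]
      _ = S z x (A y w) + A x (S z y w) := hSA z x y w
      _ = S x z (A w y) + A x (S y z w) := by rw [hS z x, hA y w, hS z y]
  have h₂ := hSA x z w y
  have h₃ : S (A z w) x y = S x (A z w) y := hS _ _ _
  have h₄ : A z (S w x y) = A z (S x w y) := by rw [hS w x y]
  have h₅ : A (S x z w) y = A y (S x z w) := hA _ _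
  linear_combination (norm := abel) h₁ - h₂ - h₃ + h₄ + h₅

/-- At a point `p`, with `A = (DB)(p)`, `S = (D²B)(p)`, `x = X(p)`, `X' = (DX)(p)` and `XY'` the
derivative of `X∘Y`, this is `P_{X∘Y}(Z,W) = X∘P_Y(Z,W) + Y∘P_X(Z,W)`. -/
theorem hertlingManin_pointwise (hA : ∀ v w, A v w = A w v)
    (hAA : ∀ v w x, A (A v w) x = A v (A w x))
    (hS : ∀ h v w, S h v w = S v h w)
    (hSA : ∀ h v w x, S h (A v w) x + A (S h v w) x = S h v (A w x) + A v (S h w x))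
    {x y z w : F} {X' Y' XY' : F → F} (hXY' : ∀ h, XY' h = S h x y + A (X' h) y + A x (Y' h)) :
    S (A x y) z w + A (XY' z) w + A z (XY' w) - XY' (A z w)
      = A x (S y z w + A (Y' z) w + A z (Y' w) - Y' (A z w))
        + A y (S x z w + A (X' z) w + A z (X' w) - X' (A z w)) := by
  have hswap : ∀ a b c, A a (A b c) = A b (A a c) := fun a b c => by
    rw [← hAA, hA a b, hAA]
  have a₁ : A (A (X' z) y) w = A y (A (X' z) w) := by rw [hAA, hswap]
  have a₂ : A (A x (Y' z)) w = A x (A (Y' z) w) := hAA _ _ _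
  have a₃ : A z (A (X' w) y) = A y (A z (X' w)) := by rw [hA (X' w) y, hswap]
  have a₄ : A z (A x (Y' w)) = A x (A z (Y' w)) := hswap _ _ _
  have a₅ : A (X' (A z w)) y = A y (X' (A z w)) := hA _ _
  rw [hXY', hXY', hXY']
  simp only [map_add, map_sub, add_apply]
  linear_combination (norm := abel)
    hertlingManin_secondOrder hA hS hSA x y z w + a₁ + a₂ + a₃ + a₄ - a₅

end Algebra

section Calculus

variable {𝕜 V F G H : Type*} [NontriviallyNormedField 𝕜]
  [NormedAddCommGroup V] [NormedSpace 𝕜 V] [NormedAddCommGroup F] [NormedSpace 𝕜 F]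
  [NormedAddCommGroup G] [NormedSpace 𝕜 G] [NormedAddCommGroup H] [NormedSpace 𝕜 H]

theorem fderiv_clm_apply_apply {c : V → F →L[𝕜] G →L[𝕜] H} {g₁ : V → F} {g₂ : V → G} {p : V}
    (hc : DifferentiableAt 𝕜 c p) (hg₁ : DifferentiableAt 𝕜 g₁ p)
    (hg₂ : DifferentiableAt 𝕜 g₂ p) (h : V) :
    fderiv 𝕜 (fun q => c q (g₁ q) (g₂ q)) p h
      = fderiv 𝕜 c p h (g₁ p) (g₂ p) + c p (fderiv 𝕜 g₁ p h) (g₂ p)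
        + c p (g₁ p) (fderiv 𝕜 g₂ p h) := by
  rw [fderiv_clm_apply (hc.clm_apply hg₁) hg₂, fderiv_clm_apply hc hg₁]
  simp only [add_apply, ContinuousLinearMap.coe_comp, Function.comp_apply,
    ContinuousLinearMap.flip_apply]
  abel

theorem fderiv_clm_apply_const_apply_const {c : V → F →L[𝕜] G →L[𝕜] H} {p : V}
    (hc : DifferentiableAt 𝕜 c p) (v : F) (w : G) (h : V) :
    fderiv 𝕜 (fun q => c q v w) p h = fderiv 𝕜 c p h v w := by
  simpa using fderiv_clm_apply_apply hc (differentiableAt_const v) (differentiableAt_const w) h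

theorem fderiv_apply_apply_of_apply_eq_add_const {B : V → F →L[𝕜] V} {u : F} {c p : V}
    (hB : DifferentiableAt 𝕜 B p) (hBu : ∀ q, B q u = q + c) (v : V) :
    fderiv 𝕜 B p v u = v := by
  have hderiv := congrArg (fun f => fderiv 𝕜 f p v) (funext hBu)
  simpa [fderiv_clm_apply hB (differentiableAt_const u)] using hderiv

theorem fderiv_assoc_identity {A : V → F →L[𝕜] F →L[𝕜] F} {p : V} (hA : DifferentiableAt 𝕜 A p)
    (hAA : ∀ q v w x, A q (A q v w) x = A q v (A q w x)) (h : V) (v w x : F) :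
    fderiv 𝕜 A p h (A p v w) x + A p (fderiv 𝕜 A p h v w) x
      = fderiv 𝕜 A p h v (A p w x) + A p v (fderiv 𝕜 A p h w x) := by
  have hderiv := congrArg (fun f => fderiv 𝕜 f p h) (funext fun q => hAA q v w x)
  have hvw : DifferentiableAt 𝕜 (fun q => A q v w) p :=
    (hA.clm_apply (differentiableAt_const v)).clm_apply (differentiableAt_const w)
  have hwx : DifferentiableAt 𝕜 (fun q => A q w x) p :=
    (hA.clm_apply (differentiableAt_const w)).clm_apply (differentiableAt_const x)
  simp only [fderiv_clm_apply_apply hA hvw (differentiableAt_const x),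
    fderiv_clm_apply_apply hA (differentiableAt_const v) hwx,
    fderiv_clm_apply_const_apply_const hA, fderiv_fun_const, Pi.zero_apply,
    zero_apply, map_zero, add_zero] at hderiv
  exact hderiv

end Calculus

theorem fderiv_mulB_apply {B : E → (E →L[ℝ] E)} (hDB : Differentiable ℝ (fderiv ℝ B))
    {X Y : E → E} (hX : Differentiable ℝ X) (hY : Differentiable ℝ Y) (p h : E) :
    fderiv ℝ (mulB B X Y) p h
      = fderiv ℝ (fderiv ℝ B) p h (X p) (Y p) + fderiv ℝ B p (fderiv ℝ X p h) (Y p)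
        + fderiv ℝ B p (X p) (fderiv ℝ Y p h) :=
  fderiv_clm_apply_apply (hDB p) (hX p) (hY p) h

theorem hmPB_apply (B : E → (E →L[ℝ] E)) (hDB : Differentiable ℝ (fderiv ℝ B))
    (X : E → E) {Z W : E → E} (hZ : Differentiable ℝ Z) (hW : Differentiable ℝ W) (p : E) :
    hmPB B X Z W p
      = fderiv ℝ (fderiv ℝ B) p (X p) (Z p) (W p) + fderiv ℝ B p (fderiv ℝ X p (Z p)) (W p)
        + fderiv ℝ B p (Z p) (fderiv ℝ X p (W p)) - fderiv ℝ X p (fderiv ℝ B p (Z p) (W p)) := by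
  simp only [hmPB, lieB]
  rw [fderiv_mulB_apply hDB hZ hW]
  simp only [mulB, lieB, map_sub, sub_apply]
  abel

theorem stmt16_general {E : Type*} [NormedAddCommGroup E] [NormedSpace ℝ E]
    (B : E → (E →L[ℝ] E)) (hB : ContDiff ℝ ∞ B) (u c : E)
    (hBu : ∀ p : E, B p u = p + c)
    (hcomm : ∀ p v w : E,
      (fderiv ℝ B p v).comp (fderiv ℝ B p w) = (fderiv ℝ B p w).comp (fderiv ℝ B p v)) :
    (∀ p v w : E, fderiv ℝ B p v w = fderiv ℝ B p w v) ∧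
    (∀ p v w x : E,
      fderiv ℝ B p (fderiv ℝ B p v w) x = fderiv ℝ B p v (fderiv ℝ B p w x)) ∧
    (∀ X : E → E, ContDiff ℝ ∞ X → mulB B (fun _ => u) X = X) ∧
    (∀ X Y Z W : E → E, ContDiff ℝ ∞ X → ContDiff ℝ ∞ Y → ContDiff ℝ ∞ Z →
      ContDiff ℝ ∞ W →
      hmPB B (mulB B X Y) Z W
        = fun p => mulB B X (hmPB B Y Z W) p + mulB B Y (hmPB B X Z W) p) := by
  have hDB : Differentiable ℝ (fderiv ℝ B) :=
    (hB.fderiv_right (m := 1) (by decide)).differentiable one_ne_zero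
  have hB₁ : Differentiable ℝ B := hB.differentiable (by decide)
  have hunit p := fderiv_apply_apply_of_apply_eq_add_const (hB₁ p) hBu
  have hA p := ContinuousLinearMap.apply_comm_of_comp_comm_of_unit (hcomm p) (hunit p)
  have hAA p := ContinuousLinearMap.apply_assoc_of_comp_comm (hcomm p) (hA p)
  have hS p h v w : fderiv ℝ (fderiv ℝ B) p h v w = fderiv ℝ (fderiv ℝ B) p v h w :=
    DFunLike.congr_fun ((hB.contDiffAt.isSymmSndFDerivAt (by simp; decide)) h v) w
  refine ⟨hA, hAA, fun X _ => funext fun p => (hA p u (X p)).trans (hunit p (X p)), ?_⟩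
  intro X Y Z W hX hY hZ hW
  have hZ₁ : Differentiable ℝ Z := hZ.differentiable (by decide)
  have hW₁ : Differentiable ℝ W := hW.differentiable (by decide)
  funext p
  rw [hmPB_apply B hDB _ hZ₁ hW₁]
  dsimp only [mulB]
  rw [hmPB_apply B hDB Y hZ₁ hW₁, hmPB_apply B hDB X hZ₁ hW₁]
  exact hertlingManin_pointwise (hA p) (hAA p) (hS p) (fderiv_assoc_identity (hDB p) hAA)
    (fderiv_mulB_apply hDB (hX.differentiable (by decide)) (hY.differentiable (by decide)) p)

/-- the multiplication induced by a primitive section data `(B,u)` is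
commutative, associative, has the constant field `u` as identity, and satisfies
the Hertling–Manin F-manifold identity. -/
theorem stmt16 {E : Type*} [NormedAddCommGroup E] [NormedSpace ℝ E] [FiniteDimensional ℝ E]
    (B : E → (E →L[ℝ] E)) (hB : ContDiff ℝ ∞ B) (u c : E)
    (hBu : ∀ p : E, B p u = p + c)
    (hcomm : ∀ p v w : E,
      (fderiv ℝ B p v).comp (fderiv ℝ B p w) = (fderiv ℝ B p w).comp (fderiv ℝ B p v)) :
    (∀ p v w : E, fderiv ℝ B p v w = fderiv ℝ B p w v) ∧
    (∀ p v w x : E,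
      fderiv ℝ B p (fderiv ℝ B p v w) x = fderiv ℝ B p v (fderiv ℝ B p w x)) ∧
    (∀ X : E → E, ContDiff ℝ ∞ X → mulB B (fun _ => u) X = X) ∧
    (∀ X Y Z W : E → E, ContDiff ℝ ∞ X → ContDiff ℝ ∞ Y → ContDiff ℝ ∞ Z →
      ContDiff ℝ ∞ W →
      hmPB B (mulB B X Y) Z W
        = fun p => mulB B X (hmPB B Y Z W) p + mulB B Y (hmPB B X Z W) p) :=
  stmt16_general B hB u c hBu hcomm
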